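/- Let p ≥ 2 be even and let τ ∈ {1,...,p} be even with τ dividing p and p/τ even. If a, b ∈ U_p and a ~ b, then μ_{p,τ}(a) = μ_{p,τ}(b); that is, μ_{p,τ} is an invariant of the equivalence relation ~. -/

import Mathlib

open scoped Classical

/-- Tuples over `ZMod p` of arbitrary length (`U_p` lives among these). -/
abbrev DehnTuple (p : ℕ) := Σ n : ℕ, Fin n → ZMod p

/-- (Op1): cyclic shift `(a_1,…,a_n) → (a_2,…,a_n,a_1)`. -/
def dOp1 {p n : ℕ} (hn : 0 < n) (a : Fin n → ZMod p) : Fin n → ZMod p :=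
  fun i => a ⟨(i.1 + 1) % n, Nat.mod_lt _ hn⟩

/-- (Op2): `(a_1,…,a_n) → (x, a_2+(-1)^2(a_1-x), …, a_n+(-1)^n(a_1-x))`. -/
def dOp2 {p n : ℕ} (hn : 0 < n) (x : ZMod p) (a : Fin n → ZMod p) : Fin n → ZMod p :=
  fun i => a i + (-1 : ZMod p) ^ (i.1 + 1) * (a ⟨0, hn⟩ - x)

/-- (Op3): `(a_1,…,a_n) → (x, a_1-a_2+x, …, a_1-a_n+x)`. -/
def dOp3 {p n : ℕ} (hn : 0 < n) (x : ZMod p) (a : Fin n → ZMod p) : Fin n → ZMod p :=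
  fun i => a ⟨0, hn⟩ - a i + x

/-- (Op4): `(a_1,…,a_n) → (a_1, -a_1+a_2+a_3, a_3, …, a_n)` (needs `n > 2`). -/
def dOp4 {p n : ℕ} (hn : 2 < n) (a : Fin n → ZMod p) : Fin n → ZMod p :=
  fun i => if i.1 = 1 then -a ⟨0, by omega⟩ + a ⟨1, by omega⟩ + a ⟨2, hn⟩ else a i

/-- A single transformation (Op1)–(Op4) on tuples in `U_p`
(tuples of even positive length). -/
inductive DehnStep (p : ℕ) : DehnTuple p → DehnTuple p → Prop
  | op1 {n : ℕ} (hn : 0 < n) (he : Even n) (a : Fin n → ZMod p) :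
      DehnStep p ⟨n, a⟩ ⟨n, dOp1 hn a⟩
  | op2 {n : ℕ} (hn : 0 < n) (he : Even n) (x : ZMod p) (a : Fin n → ZMod p) :
      DehnStep p ⟨n, a⟩ ⟨n, dOp2 hn x a⟩
  | op3 {n : ℕ} (hn : 0 < n) (he : Even n) (x : ZMod p) (a : Fin n → ZMod p) :
      DehnStep p ⟨n, a⟩ ⟨n, dOp3 hn x a⟩
  | op4 {n : ℕ} (hn : 2 < n) (he : Even n) (a : Fin n → ZMod p) :
      DehnStep p ⟨n, a⟩ ⟨n, dOp4 hn a⟩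

/-- `a ~ b`: related by a finite sequence of the transformations (Op1)–(Op4). -/
def DehnEquiv (p : ℕ) : DehnTuple p → DehnTuple p → Prop :=
  Relation.ReflTransGen (DehnStep p)

/-- An `R`-palette for Dehn `p`-colorings: a set of tuples closed under the
operations (i)–(iv). -/
def IsRPalette (p : ℕ) (P : Set (DehnTuple p)) : Prop :=
  (∀ {n : ℕ} (hn : 0 < n) (a : Fin n → ZMod p),
      (⟨n, a⟩ : DehnTuple p) ∈ P → (⟨n, dOp1 hn a⟩ : DehnTuple p) ∈ P) ∧
  (∀ {n : ℕ} (hn : 0 < n) (x : ZMod p) (a : Fin n → ZMod p),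
      (⟨n, a⟩ : DehnTuple p) ∈ P → (⟨n, dOp2 hn x a⟩ : DehnTuple p) ∈ P) ∧
  (∀ {n : ℕ} (hn : 0 < n) (x : ZMod p) (a : Fin n → ZMod p),
      (⟨n, a⟩ : DehnTuple p) ∈ P → (⟨n, dOp3 hn x a⟩ : DehnTuple p) ∈ P) ∧
  (∀ {n : ℕ} (hn : 2 < n) (a : Fin n → ZMod p),
      (⟨n, a⟩ : DehnTuple p) ∈ P → (⟨n, dOp4 hn a⟩ : DehnTuple p) ∈ P)

/-- The alternating set `A_p`: tuples of even positive length of the form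
`(x, y, x, y, …, x, y)`. -/
def altSet (p : ℕ) : Set (DehnTuple p) :=
  {t | 0 < t.1 ∧ Even t.1 ∧
    ∃ x y : ZMod p, ∀ i : Fin t.1, t.2 i = if Even i.1 then x else y}

/-- The cyclic consecutive sums `a_i + a_{i+1}` of integer representatives. -/
def cycS {p n : ℕ} (hn : 0 < n) (a : Fin n → ZMod p) (i : Fin n) : ℕ :=
  (a i).val + (a ⟨(i.1 + 1) % n, Nat.mod_lt _ hn⟩).val

/-- `τ_p(a)`: the largest `k ∈ {1,…,p}` dividing `p` such that all cyclic
consecutive sums are congruent mod `k`. -/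
noncomputable def tauInv (p : ℕ) {n : ℕ} (hn : 0 < n) (a : Fin n → ZMod p) : ℕ :=
  sSup {k : ℕ | 0 < k ∧ k ∣ p ∧ ∀ i j : Fin n, cycS hn a i ≡ cycS hn a j [MOD k]}

/-- `ε_p(a)`: `0` if all cyclic consecutive sums are even, `1` if all are odd,
`∞` otherwise. -/
noncomputable def epsInv (p : ℕ) {n : ℕ} (hn : 0 < n) (a : Fin n → ZMod p) : WithTop ℕ :=
  if ∀ i, Even (cycS hn a i) then 0
  else if ∀ i, Odd (cycS hn a i) then 1
  else ⊤

/-- `μ_p(a) = E(a) - O(a)`. -/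
noncomputable def muInv (p : ℕ) {n : ℕ} (hn : 0 < n) (a : Fin n → ZMod p) : ℤ :=
  ((Finset.univ.filter fun i : Fin n => Even (cycS hn a i)).card : ℤ) -
  ((Finset.univ.filter fun i : Fin n => Odd (cycS hn a i)).card : ℤ)

/-- The reduced tuple `b ∈ (Z_{p/τ})^n` with `b_{2j-1} = (a_{2j-1}-a_1)/τ`,
`b_{2j} = (a_{2j}-a_2)/τ` (differences of integer representatives). -/
noncomputable def reducedTuple (p : ℕ) {n : ℕ} (hn1 : 1 < n) (τ : ℕ) (a : Fin n → ZMod p) :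
    Fin n → ZMod (p / τ) :=
  fun i =>
    (((((a i).val : ℤ) -
        (if Even i.1 then ((a ⟨0, by omega⟩).val : ℤ) else ((a ⟨1, hn1⟩).val : ℤ))) /
      (τ : ℤ) : ℤ) : ZMod (p / τ))

/-- `μ_{p,τ}(a)`: `|μ_{p/τ}(b)|` if `τ_p(a) = τ`, and `∞` otherwise. -/
noncomputable def muTauInv (p : ℕ) {n : ℕ} (hn1 : 1 < n) (τ : ℕ) (a : Fin n → ZMod p) :
    WithTop ℤ :=
  if tauInv p (by omega) a = τ then
    ((|muInv (p / τ) (by omega) (reducedTuple p hn1 τ a)| : ℤ) : WithTop ℤ)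
  else ⊤

/-- The entry at (0-indexed) position `k` of the canonical tuple
`(0, 0, τ, -τ, 2τ, -2τ, …)`. -/
def pairPat (p τ k : ℕ) : ZMod p :=
  if Even k then ((k / 2 : ℕ) : ZMod p) * (τ : ZMod p)
  else -(((k / 2 : ℕ) : ZMod p) * (τ : ZMod p))

/-- The alternating sum `Σ_{i=1}^n (-1)^i x_i` in `ZMod p`. -/
def altSum (p n : ℕ) (x : Fin n → ZMod p) : ZMod p :=
  ∑ i : Fin n, (-1 : ZMod p) ^ (i.1 + 1) * x i

/-- `T_{R→A}(a_1,…,a_n) = (a_1+a_2, a_2+a_3, …, a_{n-1}+a_n, a_n+a_1)`. -/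
def traMap (p : ℕ) {n : ℕ} (hn : 0 < n) (a : Fin n → ZMod p) : Fin n → ZMod p :=
  fun i => a i + a ⟨(i.1 + 1) % n, Nat.mod_lt _ hn⟩

/-- `T_{A→R}(x_1,…,x_n) = (0, c_2, …, c_n)`, `c_j = Σ_{i=1}^{j-1} (-1)^{i+(j-1)} x_i`. -/
def tarMap (p n : ℕ) (x : Fin n → ZMod p) : Fin n → ZMod p :=
  fun k => ∑ i : Fin n, if i.1 < k.1 then (-1 : ZMod p) ^ (i.1 + k.1 + 1) * x i else 0

/-- A single transformation (Op1)^A–(Op3)^A on arc-color tuples. -/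
inductive AStep (p n : ℕ) : (Fin n → ZMod p) → (Fin n → ZMod p) → Prop
  | op1 (hn : 0 < n) (x : Fin n → ZMod p) :
      AStep p n x (fun i => x ⟨(i.1 + 1) % n, Nat.mod_lt _ hn⟩)
  | op2 (c : ZMod p) (x : Fin n → ZMod p) :
      AStep p n x (fun i => 2 * c - x i)
  | op3 (hn : 1 < n) (x : Fin n → ZMod p) :
      AStep p n x (fun i =>
        if i.1 = 0 then x ⟨1, hn⟩
        else if i.1 = 1 then 2 * x ⟨1, hn⟩ - x ⟨0, by omega⟩
        else x i)

/-- `x ~^A y`: related by a finite sequence of (Op1)^A–(Op3)^A. -/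
def AEquiv (p n : ℕ) : (Fin n → ZMod p) → (Fin n → ZMod p) → Prop :=
  Relation.ReflTransGen (AStep p n)

/-- `τ_p^A(x)`: the largest `k ∈ {1,…,p}` dividing `p` with all entries
congruent mod `k`. -/
noncomputable def tauA (p n : ℕ) (x : Fin n → ZMod p) : ℕ :=
  sSup {k : ℕ | 0 < k ∧ k ∣ p ∧ ∀ i j : Fin n, (x i).val ≡ (x j).val [MOD k]}

/-!
Write `s i = a i + a (i + 1)` for the arc colours of `a` (`traMap`). The Dehn moves act on `s`
by a rotation (Op1), trivially (Op2, as `n` is even), by `s ↦ 2c - s` (Op3), and by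
`(s₀, s₁, s₂, …) ↦ (s₁, 2s₁ - s₀, s₂, …)` (Op4). Each of these preserves, for every `k ∣ p`,
whether all `s i` agree mod `k`; hence `τ_p(a)` is invariant.

If all `s i` agree mod `τ`, they take at most the two values `s₀` and `s₀ + τ` mod `2τ`. Then
`2s₁ - s₀ ≡ s₀`, so mod `2τ` every move permutes the `s i` and then applies an injective map,
and `|#{i | s i ≡ s₀} - #{i | s i ≢ s₀}|` (mod `2τ`) is invariant. Finally
`τ (b i + b (i + 1)) = s i - s₀` for the reduced tuple `b`, and `p / τ` is even, so
`b i + b (i + 1)` is even exactly when `s i ≡ s₀ (mod 2τ)`: that count is `|μ_{p/τ}(b)|`.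
-/

open Finset

section Imbalance

variable {α β : Type*} [DecidableEq α] [DecidableEq β] {n : ℕ}

def imbalance (c : Fin n → α) (v : α) : ℤ :=
  |2 * (#{i | c i = v} : ℤ) - n|

lemma imbalance_comp_perm (c : Fin n → α) (σ : Equiv.Perm (Fin n)) (v : α) :
    imbalance (c ∘ σ) v = imbalance c v := by
  simp only [imbalance, card_filter, Function.comp_apply,
    Equiv.sum_comp σ (fun i => if c i = v then 1 else 0)]

lemma imbalance_comp_injective {g : α → β} (hg : Function.Injective g) (c : Fin n → α)
    (v : α) : imbalance (g ∘ c) (g v) = imbalance c v := by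
  simp only [imbalance, Function.comp_apply, hg.eq_iff]

lemma imbalance_eq_of_forall_eq_or_eq {c : Fin n → α} {u v : α}
    (h : ∀ i, c i = u ∨ c i = v) : imbalance c u = imbalance c v := by
  by_cases huv : u = v
  · rw [huv]
  have hcard : #{i | c i = u} + #{i | c i = v} = n := by
    rw [← card_union_of_disjoint (disjoint_filter.2 fun i _ hu hv => huv (hu.symm.trans hv)),
      ← filter_or, filter_true_of_mem fun i _ => h i, card_univ, Fintype.card_fin]
  rw [imbalance, imbalance, ← abs_neg]
  congr 1
  omega

end Imbalance

lemma natCast_eq_or_eq_add_of_natCast_eq {k a b : ℕ} (h : (a : ZMod k) = b) :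
    (a : ZMod (2 * k)) = b ∨ (a : ZMod (2 * k)) = b + k := by
  obtain ⟨u, hu⟩ := (ZMod.intCast_eq_intCast_iff_dvd_sub a b k).mp (by exact_mod_cast h)
  have h2k : ((2 * k : ℕ) : ZMod (2 * k)) = 0 := ZMod.natCast_self _
  rcases Int.even_or_odd' u with ⟨v, rfl | rfl⟩
  · left
    have : ((b : ℤ) : ZMod (2 * k)) = ((a + (2 * k : ℕ) * v : ℤ) : ZMod (2 * k)) := by
      congr 1
      push_cast
      linarith
    push_cast at this h2k
    rw [this, h2k]
    ring
  · right
    have : ((a : ℤ) : ZMod (2 * k)) = ((b + k - (2 * k : ℕ) * (v + 1) : ℤ) : ZMod (2 * k)) := by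
      congr 1
      push_cast
      linarith
    push_cast at this h2k
    rw [this, h2k]
    ring

section ArcColorings

variable {p n : ℕ}

def reduceMod (k : ℕ) (x : Fin n → ZMod p) : Fin n → ZMod k :=
  fun i => ((x i).val : ZMod k)

lemma reduceMod_eq_castHom_comp [NeZero p] {k : ℕ} (hk : k ∣ p) (x : Fin n → ZMod p) :
    reduceMod k x = ZMod.castHom hk (ZMod k) ∘ x := by
  funext i
  simp [reduceMod, ZMod.castHom_apply, ZMod.natCast_val]

lemma tauA_eq_sSup (x : Fin n → ZMod p) :
    tauA p n x = sSup {k | 0 < k ∧ k ∣ p ∧ ∀ i j, reduceMod k x i = reduceMod k x j} := by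
  simp only [tauA, reduceMod, ZMod.natCast_eq_natCast_iff]

lemma tauA_congr {x y : Fin n → ZMod p}
    (h : ∀ k, k ∣ p → ((∀ i j, reduceMod k x i = reduceMod k x j) ↔
      ∀ i j, reduceMod k y i = reduceMod k y j)) :
    tauA p n x = tauA p n y := by
  rw [tauA_eq_sSup, tauA_eq_sSup]
  congr 1
  ext k
  exact and_congr_right fun _ => and_congr_right (h k)

lemma reduceMod_tauA_eq (hp : 0 < p) (x : Fin n → ZMod p) (i j : Fin n) :
    reduceMod (tauA p n x) x i = reduceMod (tauA p n x) x j := by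
  have hmem := Nat.sSup_mem
    (s := {k | 0 < k ∧ k ∣ p ∧ ∀ i j, reduceMod k x i = reduceMod k x j})
    ⟨1, one_pos, one_dvd p, fun i j => Subsingleton.elim _ _⟩
    ⟨p, fun k hk => Nat.le_of_dvd hp hk.2.1⟩
  rw [tauA_eq_sSup]
  exact hmem.2.2 i j

end ArcColorings

/-- The move `AStep.op3`, over an arbitrary ring. -/
def aOp3 {R : Type*} [Ring R] {n : ℕ} (hn : 1 < n) (x : Fin n → R) : Fin n → R :=
  fun i => if i.1 = 0 then x ⟨1, hn⟩ else if i.1 = 1 then 2 * x ⟨1, hn⟩ - x ⟨0, by omega⟩ else x i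

section ArcMove

variable {R S : Type*} [CommRing R] [CommRing S] {n : ℕ} (hn : 1 < n)

lemma map_comp_aOp3 (f : R →+* S) (x : Fin n → R) : f ∘ aOp3 hn x = aOp3 hn (f ∘ x) := by
  funext i
  simp only [aOp3, Function.comp_apply]
  split_ifs <;> simp [map_ofNat]

lemma aOp3_forall_eq_iff {x : Fin n → R} :
    (∀ i j, aOp3 hn x i = aOp3 hn x j) ↔ ∀ i j, x i = x j := by
  constructor
  · intro h
    have h01 : x ⟨0, by omega⟩ = x ⟨1, hn⟩ := by
      have := h ⟨0, by omega⟩ ⟨1, hn⟩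
      simp only [aOp3, if_true, if_false, one_ne_zero] at this
      linear_combination this
    have hx : ∀ i, x i = x ⟨1, hn⟩ := by
      rintro ⟨_ | _ | i, hi⟩
      · exact h01
      · rfl
      · simpa [aOp3] using h ⟨i + 2, hi⟩ ⟨0, by omega⟩
    exact fun i j => (hx i).trans (hx j).symm
  · intro h i j
    simp only [aOp3]
    split_ifs <;> simp only [h _ ⟨0, by omega⟩] <;> ring

lemma aOp3_eq_comp_swap {x : Fin n → R} (h : 2 * (x ⟨1, hn⟩ - x ⟨0, by omega⟩) = 0) :
    aOp3 hn x = x ∘ Equiv.swap ⟨0, by omega⟩ ⟨1, hn⟩ := by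
  funext i
  rcases i with ⟨_ | _ | i, hi⟩
  · simp [aOp3]
  · simp only [aOp3, Function.comp_apply]
    rw [Equiv.swap_apply_right]
    simp only [zero_add, one_ne_zero, if_false, if_true]
    linear_combination h
  · simp only [aOp3, Function.comp_apply]
    rw [Equiv.swap_apply_of_ne_of_ne (by simp [Fin.ext_iff]) (by simp [Fin.ext_iff])]
    simp

end ArcMove

lemma succ_mod_eq_finRotate {n : ℕ} (hn : 0 < n) (i : Fin n) :
    (⟨(i.1 + 1) % n, Nat.mod_lt _ hn⟩ : Fin n) = finRotate n i := by
  have : NeZero n := ⟨hn.ne'⟩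
  rw [finRotate_apply, Fin.ext_iff, Fin.val_add, Fin.val_one', Nat.add_mod_mod]

noncomputable def arcMu (p τ : ℕ) {n : ℕ} (hn : 0 < n) (x : Fin n → ZMod p) : WithTop ℤ :=
  if tauA p n x = τ then
    (imbalance (reduceMod (2 * τ) x) (reduceMod (2 * τ) x ⟨0, hn⟩) : WithTop ℤ)
  else ⊤

section ArcInvariant

variable {p τ n : ℕ}

lemma reduceMod_two_mul_eq_or_eq (hp : 0 < p) {x : Fin n → ZMod p} (hx : tauA p n x = τ)
    (i j : Fin n) :
    reduceMod (2 * τ) x i = reduceMod (2 * τ) x j ∨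
      reduceMod (2 * τ) x i = reduceMod (2 * τ) x j + τ :=
  natCast_eq_or_eq_add_of_natCast_eq (hx ▸ reduceMod_tauA_eq hp x i j)

lemma two_mul_sub_reduceMod_eq_zero (hp : 0 < p) {x : Fin n → ZMod p} (hx : tauA p n x = τ)
    (i j : Fin n) : 2 * (reduceMod (2 * τ) x i - reduceMod (2 * τ) x j) = 0 := by
  have h2τ : ((2 * τ : ℕ) : ZMod (2 * τ)) = 0 := ZMod.natCast_self _
  push_cast at h2τ
  rcases reduceMod_two_mul_eq_or_eq hp hx i j with h | h <;> rw [h]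
  · ring
  · linear_combination h2τ

lemma imbalance_reduceMod_two_mul (hp : 0 < p) {x : Fin n → ZMod p} (hx : tauA p n x = τ)
    (i j : Fin n) :
    imbalance (reduceMod (2 * τ) x) (reduceMod (2 * τ) x i) =
      imbalance (reduceMod (2 * τ) x) (reduceMod (2 * τ) x j) := by
  rcases reduceMod_two_mul_eq_or_eq hp hx i j with h | h <;> rw [h]
  exact imbalance_eq_of_forall_eq_or_eq fun l => (reduceMod_two_mul_eq_or_eq hp hx l j).symm

lemma arcMu_congr (hn : 0 < n) {x y : Fin n → ZMod p}
    (hconst : ∀ k, k ∣ p → ((∀ i j, reduceMod k x i = reduceMod k x j) ↔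
      ∀ i j, reduceMod k y i = reduceMod k y j))
    (himb : tauA p n x = τ →
      imbalance (reduceMod (2 * τ) y) (reduceMod (2 * τ) y ⟨0, hn⟩) =
        imbalance (reduceMod (2 * τ) x) (reduceMod (2 * τ) x ⟨0, hn⟩)) :
    arcMu p τ hn y = arcMu p τ hn x := by
  unfold arcMu
  rw [← tauA_congr hconst]
  split_ifs with hx
  · rw [himb hx]
  · rfl

lemma arcMu_comp_perm (hp : 0 < p) (hn : 0 < n) (x : Fin n → ZMod p) (σ : Equiv.Perm (Fin n)) :
    arcMu p τ hn (x ∘ σ) = arcMu p τ hn x := by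
  refine arcMu_congr hn (fun k _ => ⟨fun h i j => h _ _, fun h i j => ?_⟩) fun hx => ?_
  · simpa [reduceMod] using h (σ.symm i) (σ.symm j)
  · change imbalance (reduceMod (2 * τ) x ∘ σ) _ = _
    rw [imbalance_comp_perm]
    exact imbalance_reduceMod_two_mul hp hx _ _

lemma arcMu_two_mul_sub [NeZero p] (h2τ : 2 * τ ∣ p) (hn : 0 < n) (c : ZMod p)
    (x : Fin n → ZMod p) : arcMu p τ hn (fun i => 2 * c - x i) = arcMu p τ hn x := by
  have hred : ∀ k (hk : k ∣ p), reduceMod k (fun i => 2 * c - x i) =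
      (fun v => 2 * ZMod.castHom hk (ZMod k) c - v) ∘ reduceMod k x := by
    intro k hk
    rw [reduceMod_eq_castHom_comp hk, reduceMod_eq_castHom_comp hk]
    funext i
    simp only [Function.comp_apply, map_sub, map_mul, map_ofNat]
  refine arcMu_congr hn (fun k hk => ?_) fun _ => ?_
  · simp only [hred k hk, Function.comp_apply, sub_right_inj]
  · rw [hred _ h2τ]
    exact imbalance_comp_injective sub_right_injective _ _

lemma arcMu_aOp3 [NeZero p] (h2τ : 2 * τ ∣ p) (hn : 0 < n) (hn1 : 1 < n) (x : Fin n → ZMod p) :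
    arcMu p τ hn (aOp3 hn1 x) = arcMu p τ hn x := by
  have hred : ∀ k (hk : k ∣ p), reduceMod k (aOp3 hn1 x) = aOp3 hn1 (reduceMod k x) := by
    intro k hk
    rw [reduceMod_eq_castHom_comp hk, reduceMod_eq_castHom_comp hk, map_comp_aOp3]
  have hp : 0 < p := Nat.pos_of_neZero p
  refine arcMu_congr hn (fun k hk => ?_) fun hx => ?_
  · rw [hred k hk, aOp3_forall_eq_iff]
  · rw [hred _ h2τ, aOp3_eq_comp_swap hn1 (two_mul_sub_reduceMod_eq_zero hp hx _ _),
      imbalance_comp_perm]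
    exact imbalance_reduceMod_two_mul hp hx _ _

end ArcInvariant

lemma neg_one_pow_mod_of_even {R : Type*} [Ring R] {n : ℕ} (hn : Even n)
    (m : ℕ) : (-1 : R) ^ (m % n) = (-1) ^ m := by
  rw [neg_one_pow_eq_pow_mod_two, Nat.mod_mod_of_dvd _ (even_iff_two_dvd.mp hn),
    ← neg_one_pow_eq_pow_mod_two]

section RegionToArc

variable {p n : ℕ}

lemma reduceMod_traMap [NeZero p] {k : ℕ} (hk : k ∣ p) (hn : 0 < n) (a : Fin n → ZMod p)
    (i : Fin n) : reduceMod k (traMap p hn a) i = (cycS hn a i : ZMod k) := by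
  rw [reduceMod, traMap, ZMod.val_add, ZMod.natCast_eq_natCast_iff]
  exact (Nat.mod_modEq _ p).of_dvd hk

lemma tauInv_eq_tauA_traMap [NeZero p] (hn : 0 < n) (a : Fin n → ZMod p) :
    tauInv p hn a = tauA p n (traMap p hn a) := by
  rw [tauA_eq_sSup, tauInv]
  congr 1
  ext k
  simp only [← ZMod.natCast_eq_natCast_iff]
  exact and_congr_right fun _ => and_congr_right fun hk => by simp only [reduceMod_traMap hk]

lemma traMap_dOp1 (hn : 0 < n) (a : Fin n → ZMod p) :
    traMap p hn (dOp1 hn a) = traMap p hn a ∘ finRotate n := by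
  funext i
  rw [Function.comp_apply, ← succ_mod_eq_finRotate hn]
  rfl

lemma traMap_dOp2 (hn : 0 < n) (he : Even n) (x : ZMod p) (a : Fin n → ZMod p) :
    traMap p hn (dOp2 hn x a) = traMap p hn a := by
  funext i
  simp only [traMap, dOp2, pow_succ _ ((i.1 + 1) % n), neg_one_pow_mod_of_even he]
  ring

lemma traMap_dOp3 (hn : 0 < n) (x : ZMod p) (a : Fin n → ZMod p) :
    traMap p hn (dOp3 hn x a) = fun i => 2 * (a ⟨0, hn⟩ + x) - traMap p hn a i := by
  funext i
  simp only [traMap, dOp3]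
  ring

lemma traMap_dOp4 (hn : 2 < n) (a : Fin n → ZMod p) :
    traMap p (by omega) (dOp4 hn a) = aOp3 (by omega) (traMap p (by omega) a) := by
  funext i
  rcases i with ⟨_ | _ | i, hi⟩
  iterate 2
    simp [traMap, dOp4, aOp3, Nat.mod_eq_of_lt hn, Nat.mod_eq_of_lt (show 1 < n by omega)]
    ring
  · have hnext : (i + 2 + 1) % n ≠ 1 := by
      rcases Nat.lt_or_ge (i + 3) n with h | h
      · rw [Nat.mod_eq_of_lt h]; omega
      · rw [show i + 2 + 1 = n by omega, Nat.mod_self]; omega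
    simp [traMap, dOp4, aOp3, hnext]

end RegionToArc

lemma two_mul_dvd_of_even_div {τ p : ℕ} (hτd : τ ∣ p) (hq : Even (p / τ)) : 2 * τ ∣ p :=
  mul_comm τ 2 ▸ Nat.mul_dvd_of_dvd_div hτd (even_iff_two_dvd.mp hq)

lemma even_val_intCast_iff {q : ℕ} [NeZero q] (hq : Even q) (z : ℤ) :
    Even (z : ZMod q).val ↔ Even z := by
  rw [← Int.even_coe_nat, ZMod.val_intCast, Int.even_iff, Int.even_iff,
    Int.emod_emod_of_dvd _ (by exact_mod_cast even_iff_two_dvd.mp hq)]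

lemma muInv_eq_two_mul_card_sub {q n : ℕ} (hn : 0 < n) (b : Fin n → ZMod q) :
    muInv q hn b = 2 * (#{i | Even (cycS hn b i)} : ℤ) - n := by
  have hcard := card_filter_add_card_filter_not (s := univ) fun i => Even (cycS hn b i)
  simp only [Nat.not_even_iff_odd, card_univ, Fintype.card_fin] at hcard
  rw [muInv]
  omega

section ReducedTuple

variable {p τ n : ℕ}

/-- The numerator of `reducedTuple`. -/
def reducedOffset (hn1 : 1 < n) (a : Fin n → ZMod p) (i : Fin n) : ℤ :=
  ((a i).val : ℤ) -
    (if Even i.1 then ((a ⟨0, by omega⟩).val : ℤ) else ((a ⟨1, hn1⟩).val : ℤ))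

lemma reducedTuple_eq (hn1 : 1 < n) (a : Fin n → ZMod p) (i : Fin n) :
    reducedTuple p hn1 τ a i = ((reducedOffset hn1 a i / τ : ℤ) : ZMod (p / τ)) :=
  rfl

lemma reducedOffset_add_next (hn1 : 1 < n) (hne : Even n) (a : Fin n → ZMod p) (i : Fin n) :
    reducedOffset hn1 a i + reducedOffset hn1 a ⟨(i.1 + 1) % n, Nat.mod_lt _ (by omega)⟩ =
      (cycS (by omega) a i : ℤ) - cycS (by omega) a ⟨0, by omega⟩ := by
  have hpar : Even ((i.1 + 1) % n) ↔ ¬ Even i.1 := by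
    rw [Nat.even_iff, Nat.mod_mod_of_dvd _ (even_iff_two_dvd.mp hne), ← Nat.even_iff,
      Nat.even_add_one]
  simp only [reducedOffset, cycS, hpar, zero_add, Nat.mod_eq_of_lt hn1]
  split_ifs <;> push_cast <;> ring

lemma dvd_reducedOffset (hn1 : 1 < n) (hne : Even n) (a : Fin n → ZMod p)
    (hcong : ∀ i, (cycS (by omega) a i : ZMod τ) = cycS (by omega) a ⟨0, by omega⟩)
    (i : Fin n) : (τ : ℤ) ∣ reducedOffset hn1 a i := by
  obtain ⟨m, hm⟩ := i
  induction m with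
  | zero => simp [reducedOffset]
  | succ m ih =>
    have hsum := reducedOffset_add_next hn1 hne a ⟨m, by omega⟩
    simp only [Nat.mod_eq_of_lt hm] at hsum
    have hs : (τ : ℤ) ∣ (cycS (by omega) a ⟨m, by omega⟩ : ℤ) - cycS (by omega) a ⟨0, by omega⟩ :=
      (ZMod.intCast_eq_intCast_iff_dvd_sub _ _ _).mp (by exact_mod_cast (hcong _).symm)
    rw [show reducedOffset hn1 a ⟨m + 1, hm⟩ = _ - reducedOffset hn1 a ⟨m, by omega⟩ from
      eq_sub_of_add_eq' hsum]
    exact dvd_sub hs (ih (by omega))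

lemma even_cycS_reducedTuple_iff (hτ : 0 < τ) (hq : Even (p / τ)) [NeZero (p / τ)]
    (hn1 : 1 < n) (hne : Even n) (a : Fin n → ZMod p)
    (hcong : ∀ i, (cycS (by omega) a i : ZMod τ) = cycS (by omega) a ⟨0, by omega⟩)
    (i : Fin n) :
    Even (cycS (by omega) (reducedTuple p hn1 τ a) i) ↔
      (cycS (by omega) a i : ZMod (2 * τ)) = cycS (by omega) a ⟨0, by omega⟩ := by
  obtain ⟨B, hB⟩ := dvd_reducedOffset hn1 hne a hcong i
  obtain ⟨C, hC⟩ := dvd_reducedOffset hn1 hne a hcong ⟨(i.1 + 1) % n, Nat.mod_lt _ (by omega)⟩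
  have hsum := reducedOffset_add_next hn1 hne a i
  have hτ' : (τ : ℤ) ≠ 0 := by exact_mod_cast hτ.ne'
  calc Even (cycS (by omega) (reducedTuple p hn1 τ a) i) ↔ Even (B + C) := by
        simp only [cycS, reducedTuple_eq, Nat.even_add, Int.even_add, hB, hC,
          Int.mul_ediv_cancel_left _ hτ', even_val_intCast_iff hq]
    _ ↔ ((2 * τ : ℕ) : ℤ) ∣ (cycS (by omega) a i : ℤ) - cycS (by omega) a ⟨0, by omega⟩ := by
        rw [← hsum, hB, hC, ← mul_add, even_iff_two_dvd, Nat.cast_mul, Nat.cast_ofNat,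
          mul_comm (2 : ℤ), mul_dvd_mul_iff_left hτ']
    _ ↔ _ := by
        rw [eq_comm, ← ZMod.intCast_eq_intCast_iff_dvd_sub]
        push_cast
        rfl

end ReducedTuple

lemma muTauInv_eq_arcMu {p τ n : ℕ} (hp : 0 < p) (hτd : τ ∣ p) (hq : Even (p / τ))
    (hn1 : 1 < n) (hne : Even n) (a : Fin n → ZMod p) :
    muTauInv p hn1 τ a = arcMu p τ (by omega) (traMap p (by omega) a) := by
  have : NeZero p := ⟨hp.ne'⟩
  have hτ : 0 < τ := Nat.pos_of_dvd_of_pos hτd hp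
  have : NeZero (p / τ) := ⟨(Nat.div_pos (Nat.le_of_dvd hp hτd) hτ).ne'⟩
  unfold muTauInv arcMu
  rw [← tauInv_eq_tauA_traMap]
  split_ifs with hτa
  · have hcong : ∀ i, (cycS (by omega) a i : ZMod τ) = cycS (by omega) a ⟨0, by omega⟩ := by
      intro i
      have := reduceMod_tauA_eq hp (traMap p (by omega) a) i ⟨0, by omega⟩
      rwa [← tauInv_eq_tauA_traMap, hτa, reduceMod_traMap hτd, reduceMod_traMap hτd] at this
    rw [muInv_eq_two_mul_card_sub, imbalance,
      filter_congr fun i _ => even_cycS_reducedTuple_iff hτ hq hn1 hne a hcong i]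
    simp only [reduceMod_traMap (two_mul_dvd_of_even_div hτd hq)]
  · rfl

noncomputable def dehnMu (p τ : ℕ) (t : DehnTuple p) : WithTop ℤ :=
  if h : 0 < t.1 then arcMu p τ h (traMap p h t.2) else ⊤

section DehnInvariant

variable {p τ : ℕ} [NeZero p]

lemma dehnMu_eq_of_dehnStep (h2τ : 2 * τ ∣ p) {t u : DehnTuple p} (h : DehnStep p t u) :
    dehnMu p τ u = dehnMu p τ t := by
  have hp : 0 < p := Nat.pos_of_neZero p
  cases h with
  | op1 hn _ _ =>
    simp only [dehnMu, dif_pos hn, traMap_dOp1]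
    exact arcMu_comp_perm hp hn _ _
  | op2 hn he _ _ => simp only [dehnMu, dif_pos hn, traMap_dOp2 hn he]
  | op3 hn _ _ _ =>
    simp only [dehnMu, dif_pos hn, traMap_dOp3]
    exact arcMu_two_mul_sub h2τ hn _ _
  | @op4 n hn _ _ =>
    simp only [dehnMu, dif_pos (show 0 < n by omega), traMap_dOp4]
    exact arcMu_aOp3 h2τ _ _ _

lemma dehnMu_eq_of_dehnEquiv (h2τ : 2 * τ ∣ p) {t u : DehnTuple p} (h : DehnEquiv p t u) :
    dehnMu p τ t = dehnMu p τ u := by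
  induction h with
  | refl => rfl
  | tail _ hstep ih => exact ih.trans (dehnMu_eq_of_dehnStep h2τ hstep).symm

end DehnInvariant

theorem muTauInv_invariant_general (p τ : ℕ) (hp : 2 ≤ p)
    (hτd : τ ∣ p)
    (hq : Even (p / τ)) (m n : ℕ)
    (hm : 1 < m) (hme : Even m) (hn : 1 < n) (hne : Even n)
    (a : Fin m → ZMod p) (b : Fin n → ZMod p)
    (h : DehnEquiv p ⟨m, a⟩ ⟨n, b⟩) :
    muTauInv p hm τ a = muTauInv p hn τ b := by
  have : NeZero p := ⟨by omega⟩
  have hdehn := dehnMu_eq_of_dehnEquiv (τ := τ) (two_mul_dvd_of_even_div hτd hq) h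
  simp only [dehnMu, dif_pos (show 0 < m by omega), dif_pos (show 0 < n by omega)] at hdehn
  rw [muTauInv_eq_arcMu (by omega) hτd hq hm hme, muTauInv_eq_arcMu (by omega) hτd hq hn hne,
    hdehn]

/-- for even `p` and even `τ ∈ {1,…,p}` with `τ ∣ p` and `p/τ`
even, `μ_{p,τ}` is an invariant of `~`. -/
theorem muTauInv_invariant (p τ : ℕ) (hp : 2 ≤ p) (hpe : Even p)
    (hτ1 : 1 ≤ τ) (hτp : τ ≤ p) (hτe : Even τ) (hτd : τ ∣ p)
    (hq : Even (p / τ)) (m n : ℕ)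
    (hm : 1 < m) (hme : Even m) (hn : 1 < n) (hne : Even n)
    (a : Fin m → ZMod p) (b : Fin n → ZMod p)
    (h : DehnEquiv p ⟨m, a⟩ ⟨n, b⟩) :
    muTauInv p hm τ a = muTauInv p hn τ b :=
  muTauInv_invariant_general p τ hp hτd hq m n hm hme hn hne a b h
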